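/- arXiv:1801.02755 — 9 statements merged into one kernel-verified Lean document; each statement's English description precedes it below -/
import Mathlib

section
/- Fix c ∈ ℝ and let Ω = ℝ³ ∖ {(0,0,z) : z ≥ c}. Define on Ω the functions r(x,y,z) = √(x² + y² + (z−c)²), f(x,y,z) = y / (2 r (r − (z−c))) and g(x,y,z) = −x / (2 r (r − (z−c))) (note r − (z−c) > 0 on Ω). Then at every point of Ω the vector field (f, g, 0) satisfies the curl identities: −∂g/∂z = x/(2r³), ∂f/∂z = y/(2r³), and ∂g/∂x − ∂f/∂y = (z−c)/(2r³). -/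
/-!
In the shifted coordinate `w = z - c` we have `f = y Φ` and `g = -x Φ` with
`Φ = 1 / (2r(r - w))`. Since `∂r/∂w = w/r`, the `w`-derivative of `2r(r - w)` is
`-2(r - w)²/r`, so `∂Φ/∂w = 1/(2r³)`, which gives the first two identities. For the third,
`∂g/∂x - ∂f/∂y = -2Φ - (x ∂Φ/∂x + y ∂Φ/∂y)`, and `x² + y² = (r - w)(r + w)` reduces it
to `w/(2r³)`.
-/

namespace GibbonsHawking

noncomputable def radius (x y w : ℝ) : ℝ := √(x ^ 2 + y ^ 2 + w ^ 2)

noncomputable def connectionCoeff (x y w : ℝ) : ℝ :=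
  (2 * radius x y w * (radius x y w - w))⁻¹

lemma radius_comm (x y w : ℝ) : radius x y w = radius y x w := by
  simp only [radius, add_comm (x ^ 2)]

lemma connectionCoeff_comm (x y w : ℝ) : connectionCoeff x y w = connectionCoeff y x w := by
  simp only [connectionCoeff, radius_comm x]

lemma radius_sq (x y w : ℝ) : radius x y w ^ 2 = x ^ 2 + y ^ 2 + w ^ 2 :=
  Real.sq_sqrt (by positivity)

variable {x y w : ℝ}

lemma lt_radius (h : ¬(x = 0 ∧ y = 0 ∧ 0 ≤ w)) : w < radius x y w := by
  rcases lt_or_ge w 0 with hw | hw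
  · exact hw.trans_le (Real.sqrt_nonneg _)
  · have hxy : 0 < x ^ 2 + y ^ 2 := by
      by_contra! hle
      exact h ⟨by nlinarith [sq_nonneg x, sq_nonneg y], by nlinarith [sq_nonneg x, sq_nonneg y],
        hw⟩
    calc w = √(w ^ 2) := (Real.sqrt_sq hw).symm
      _ < radius x y w := Real.sqrt_lt_sqrt (sq_nonneg w) (by linarith)

lemma radius_pos (h : ¬(x = 0 ∧ y = 0 ∧ 0 ≤ w)) : 0 < radius x y w := by
  refine Real.sqrt_pos.mpr ?_
  by_contra! hle
  have hw : w < 0 := by simpa [radius, Real.sqrt_eq_zero'.mpr hle] using lt_radius h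
  nlinarith [sq_nonneg x, sq_nonneg y]

lemma hasDerivAt_radius_left (h : 0 < radius x y w) :
    HasDerivAt (fun x' => radius x' y w) (x / radius x y w) x := by
  have hsum : HasDerivAt (fun x' => x' ^ 2 + y ^ 2 + w ^ 2) (2 * x) x := by
    simpa using ((hasDerivAt_pow 2 x).add_const (y ^ 2)).add_const (w ^ 2)
  exact (hsum.sqrt (Real.sqrt_pos.mp h).ne').congr_deriv (mul_div_mul_left _ _ two_ne_zero)

lemma hasDerivAt_radius_right (h : 0 < radius x y w) :
    HasDerivAt (fun w' => radius x y w') (w / radius x y w) w := by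
  have hsum : HasDerivAt (fun w' => x ^ 2 + y ^ 2 + w' ^ 2) (2 * w) w := by
    simpa using (hasDerivAt_pow 2 w).const_add (x ^ 2 + y ^ 2)
  exact (hsum.sqrt (Real.sqrt_pos.mp h).ne').congr_deriv (mul_div_mul_left _ _ two_ne_zero)

lemma hasDerivAt_connectionCoeff_left (h : ¬(x = 0 ∧ y = 0 ∧ 0 ≤ w)) :
    HasDerivAt (fun x' => connectionCoeff x' y w)
      (-x * (2 * radius x y w - w) / (2 * radius x y w ^ 3 * (radius x y w - w) ^ 2)) x := by
  have hr := radius_pos h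
  have hrw := sub_pos.mpr (lt_radius h)
  have hD : HasDerivAt (fun x' => 2 * radius x' y w * (radius x' y w - w))
      (2 * (x / radius x y w) * (radius x y w - w) + 2 * radius x y w * (x / radius x y w)) x :=
    ((hasDerivAt_radius_left hr).const_mul 2).mul ((hasDerivAt_radius_left hr).sub_const w)
  refine (hD.inv (mul_pos (mul_pos two_pos hr) hrw).ne').congr_deriv ?_
  field_simp
  ring

lemma hasDerivAt_connectionCoeff_middle (h : ¬(x = 0 ∧ y = 0 ∧ 0 ≤ w)) :
    HasDerivAt (fun y' => connectionCoeff x y' w)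
      (-y * (2 * radius x y w - w) / (2 * radius x y w ^ 3 * (radius x y w - w) ^ 2)) y := by
  have h' : ¬(y = 0 ∧ x = 0 ∧ 0 ≤ w) := fun ⟨hy, hx, hw⟩ => h ⟨hx, hy, hw⟩
  rw [funext fun y' => connectionCoeff_comm x y' w, radius_comm x]
  exact hasDerivAt_connectionCoeff_left h'

lemma hasDerivAt_connectionCoeff_right (h : ¬(x = 0 ∧ y = 0 ∧ 0 ≤ w)) :
    HasDerivAt (fun w' => connectionCoeff x y w') (1 / (2 * radius x y w ^ 3)) w := by
  have hr := radius_pos h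
  have hrw := sub_pos.mpr (lt_radius h)
  have hD : HasDerivAt (fun w' => 2 * radius x y w' * (radius x y w' - w'))
      (2 * (w / radius x y w) * (radius x y w - w) + 2 * radius x y w * (w / radius x y w - 1)) w :=
    ((hasDerivAt_radius_right hr).const_mul 2).mul
      ((hasDerivAt_radius_right hr).sub (hasDerivAt_id w))
  refine (hD.inv (mul_pos (mul_pos two_pos hr) hrw).ne').congr_deriv ?_
  field_simp
  ring

lemma deriv_sub_deriv_connectionCoeff (h : ¬(x = 0 ∧ y = 0 ∧ 0 ≤ w)) :
    deriv (fun x' => -x' * connectionCoeff x' y w) x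
        - deriv (fun y' => y' * connectionCoeff x y' w) y = w / (2 * radius x y w ^ 3) := by
  have hr := radius_pos h
  have hrw := sub_pos.mpr (lt_radius h)
  have hgx : HasDerivAt (fun x' => -x' * connectionCoeff x' y w) _ x :=
    (hasDerivAt_neg x).mul (hasDerivAt_connectionCoeff_left h)
  have hfy : HasDerivAt (fun y' => y' * connectionCoeff x y' w) _ y :=
    (hasDerivAt_id' y).mul (hasDerivAt_connectionCoeff_middle h)
  rw [hgx.deriv, hfy.deriv, connectionCoeff]
  field_simp
  linear_combination (w - 2 * radius x y w) * radius_sq x y w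

end GibbonsHawking

open GibbonsHawking in
/-- On `Ω = ℝ³ ∖ {(0,0,z) : z ≥ c}`, with `r = √(x² + y² + (z−c)²)`,
`f = y/(2r(r−(z−c)))` and `g = −x/(2r(r−(z−c)))`, the vector field `(f, g, 0)`
satisfies the curl identities `−∂g/∂z = x/(2r³)`, `∂f/∂z = y/(2r³)` and
`∂g/∂x − ∂f/∂y = (z−c)/(2r³)`, i.e. `dα = −*dV` for the connection 1-form
`α = f dx + g dy` and `V = 1/(2r)`. -/
theorem gibbons_hawking_connection_form_curl
    (c : ℝ) (x y z : ℝ) (h : ¬(x = 0 ∧ y = 0 ∧ c ≤ z))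
    (r f g : ℝ → ℝ → ℝ → ℝ)
    (hr : ∀ x y z, r x y z = Real.sqrt (x ^ 2 + y ^ 2 + (z - c) ^ 2))
    (hf : ∀ x y z, f x y z = y / (2 * r x y z * (r x y z - (z - c))))
    (hg : ∀ x y z, g x y z = -x / (2 * r x y z * (r x y z - (z - c)))) :
    -deriv (fun z' => g x y z') z = x / (2 * r x y z ^ 3) ∧
    deriv (fun z' => f x y z') z = y / (2 * r x y z ^ 3) ∧
    deriv (fun x' => g x' y z) x - deriv (fun y' => f x y' z) y
      = (z - c) / (2 * r x y z ^ 3) := by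
  have hΩ : ¬(x = 0 ∧ y = 0 ∧ 0 ≤ z - c) := by rwa [sub_nonneg]
  have hr' : ∀ x y z, r x y z = radius x y (z - c) := hr
  have hf' : ∀ x y z, f x y z = y * connectionCoeff x y (z - c) := by
    intro x y z; rw [hf, hr', div_eq_mul_inv, connectionCoeff]
  have hg' : ∀ x y z, g x y z = -x * connectionCoeff x y (z - c) := by
    intro x y z; rw [hg, hr', div_eq_mul_inv, connectionCoeff]
  have hz (a : ℝ) : deriv (fun z' => a * connectionCoeff x y (z' - c)) z
      = a / (2 * radius x y (z - c) ^ 3) := by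
    rw [deriv_comp_sub_const (f := fun w => a * connectionCoeff x y w),
      ((hasDerivAt_connectionCoeff_right hΩ).const_mul a).deriv, mul_one_div]
  simp only [hf', hg', hr']
  refine ⟨by rw [hz, neg_div, neg_neg], hz y, deriv_sub_deriv_connectionCoeff hΩ⟩
end

section
/- Let c_1 < c_2 < ⋯ < c_n be real numbers and define μ : ℝ³ → ℝ² by μ(x,y,z) = (μ_1, μ_2) with μ_1 = −z and μ_2 = (1/2) ∑_{j=1}^n (r_j + z − c_j), where r_j = √(x² + y² + (z − c_j)²). Then the image of μ is exactly the convex set { (m_1, m_2) ∈ ℝ² : m_2 + ∑_{j=1}^k (m_1 + c_j) ≥ 0 for every k = 0, 1, …, n }. -/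
/-- A lower set in `Fin n` (as a finset) is an initial segment. -/
lemma lowerSet_eq_initial {n : ℕ} (S : Finset (Fin n))
    (hS : ∀ i j : Fin n, i ≤ j → j ∈ S → i ∈ S) :
    S = Finset.univ.filter (fun j : Fin n => (j : ℕ) < S.card) := by
  ext j
  simp only [Finset.mem_filter, Finset.mem_univ, true_and]
  constructor
  · intro hj
    have hsub : Finset.Iic j ⊆ S := fun i hi => hS i j (Finset.mem_Iic.mp hi) hj
    have := Finset.card_le_card hsub
    rw [Fin.card_Iic] at this
    omega
  · intro hj
    by_contra hjS
    have hsub : S ⊆ Finset.Iio j := by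
      intro i hi
      rw [Finset.mem_Iio]
      by_contra hij
      exact hjS (hS j i (le_of_not_gt hij) hi)
    have := Finset.card_le_card hsub
    rw [Fin.card_Iio] at this
    omega

/-- The image of the moment map `μ(x,y,z) = (−z, (1/2) ∑_j (r_j + z − c_j))`,
`r_j = √(x² + y² + (z − c_j)²)`, of the toric Gibbons-Hawking space with centers
`(0,0,c_1), …, (0,0,c_n)`, `c_1 < ⋯ < c_n`, is exactly the convex region
`{ (m₁, m₂) : m₂ + ∑_{j=1}^k (m₁ + c_j) ≥ 0 for k = 0, 1, …, n }. -/
theorem gibbons_hawking_moment_map_image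
    (n : ℕ) (hn : 0 < n) (c : Fin n → ℝ) (hc : StrictMono c)
    (μ : ℝ × ℝ × ℝ → ℝ × ℝ)
    (hμ : ∀ x y z : ℝ, μ (x, y, z) =
      (-z, (1 / 2) * ∑ j, (Real.sqrt (x ^ 2 + y ^ 2 + (z - c j) ^ 2) + z - c j))) :
    Set.range μ =
      { m : ℝ × ℝ |
        ∀ k : ℕ, k ≤ n →
          0 ≤ m.2 + ∑ j ∈ Finset.univ.filter (fun j : Fin n => (j : ℕ) < k), (m.1 + c j) } := by
  ext m
  simp only [Set.mem_range, Set.mem_setOf_eq]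
  constructor
  · rintro ⟨⟨x, y, z⟩, hp⟩ k hk
    rw [hμ x y z] at hp
    rw [← hp]
    simp only
    have key : ∀ j : Fin n, |z - c j| ≤ Real.sqrt (x ^ 2 + y ^ 2 + (z - c j) ^ 2) := by
      intro j
      rw [← Real.sqrt_sq_eq_abs]
      exact Real.sqrt_le_sqrt (by nlinarith [sq_nonneg x, sq_nonneg y])
    rw [Finset.sum_filter, Finset.mul_sum, ← Finset.sum_add_distrib]
    apply Finset.sum_nonneg
    intro j _
    have h1 := key j
    have h2 := le_abs_self (z - c j)
    have h3 := neg_abs_le (z - c j)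
    split_ifs with h
    · linarith
    · linarith
  · intro hm
    set z : ℝ := -m.1 with hz
    set g : ℝ → ℝ :=
      fun x => (1 / 2) * ∑ j, (Real.sqrt (x ^ 2 + 0 ^ 2 + (z - c j) ^ 2) + z - c j) with hg
    have hcont : Continuous g := by fun_prop
    set S : Finset (Fin n) := Finset.univ.filter (fun j => 0 ≤ z - c j) with hSdef
    have hSlower : ∀ i j : Fin n, i ≤ j → j ∈ S → i ∈ S := by
      intro i j hij hj
      simp only [hSdef, Finset.mem_filter, Finset.mem_univ, true_and] at hj ⊢
      have := hc.monotone hij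
      linarith
    have hSeq := lowerSet_eq_initial S hSlower
    have hcard : S.card ≤ n := le_trans (Finset.card_le_univ S) (by simp)
    have hg0 : g 0 ≤ m.2 := by
      have hm' := hm S.card hcard
      have hval : g 0 = ∑ j ∈ S, (z - c j) := by
        rw [hg]
        simp only
        rw [hSdef, Finset.sum_filter, Finset.mul_sum]
        apply Finset.sum_congr rfl
        intro j _
        have hsqrt : Real.sqrt ((0 : ℝ) ^ 2 + 0 ^ 2 + (z - c j) ^ 2) = |z - c j| := by
          rw [show (0 : ℝ) ^ 2 + 0 ^ 2 + (z - c j) ^ 2 = (z - c j) ^ 2 by ring,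
            Real.sqrt_sq_eq_abs]
        rw [hsqrt]
        rcases le_or_gt 0 (z - c j) with h | h
        · rw [if_pos h, abs_of_nonneg h]; ring
        · rw [if_neg (not_le.mpr h), abs_of_neg h]; ring
      have hneg : ∑ j ∈ S, (z - c j)
          = -∑ j ∈ Finset.univ.filter (fun j : Fin n => (j : ℕ) < S.card), (m.1 + c j) := by
        rw [← hSeq, ← Finset.sum_neg_distrib]
        apply Finset.sum_congr rfl
        intro j _
        rw [hz]
        ring
      rw [hval, hneg]
      linarith
    set j0 : Fin n := ⟨0, hn⟩ with hj0
    set X : ℝ := |2 * m.2 - (z - c j0)| with hX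
    have hX0 : 0 ≤ X := abs_nonneg _
    have hterm : ∀ j : Fin n, |z - c j| ≤ Real.sqrt (X ^ 2 + 0 ^ 2 + (z - c j) ^ 2) := by
      intro j
      rw [← Real.sqrt_sq_eq_abs]
      exact Real.sqrt_le_sqrt (by nlinarith [sq_nonneg X])
    have hgX : m.2 ≤ g X := by
      have h1 : ∀ j : Fin n, 0 ≤ Real.sqrt (X ^ 2 + 0 ^ 2 + (z - c j) ^ 2) + z - c j := by
        intro j
        have := hterm j
        have := neg_abs_le (z - c j)
        linarith
      have h2 : 2 * m.2 ≤ Real.sqrt (X ^ 2 + 0 ^ 2 + (z - c j0) ^ 2) + z - c j0 := by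
        have hXle : |X| ≤ Real.sqrt (X ^ 2 + 0 ^ 2 + (z - c j0) ^ 2) := by
          rw [← Real.sqrt_sq_eq_abs]
          exact Real.sqrt_le_sqrt (by nlinarith [sq_nonneg (z - c j0)])
        have hle : 2 * m.2 - (z - c j0) ≤ X := le_abs_self _
        rw [abs_of_nonneg hX0] at hXle
        linarith
      have hsum := Finset.single_le_sum
        (f := fun j : Fin n => Real.sqrt (X ^ 2 + 0 ^ 2 + (z - c j) ^ 2) + z - c j)
        (fun j _ => h1 j) (Finset.mem_univ j0)
      have h3 := le_trans h2 hsum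
      rw [hg]
      calc m.2 = 1 / 2 * (2 * m.2) := by ring
        _ ≤ 1 / 2 * ∑ x : Fin n,
            (Real.sqrt (X ^ 2 + 0 ^ 2 + (z - c x) ^ 2) + z - c x) :=
          mul_le_mul_of_nonneg_left h3 (by norm_num)
    obtain ⟨x, -, hx⟩ := intermediate_value_Icc hX0 hcont.continuousOn ⟨hg0, hgX⟩
    refine ⟨(x, 0, z), ?_⟩
    rw [hμ x 0 z]
    exact Prod.ext (by rw [hz]; ring) hx
end

section
/- Let c_1 < c_2 < ⋯ < c_n be real numbers and let (x, y, z) ∈ ℝ³ with ρ := √(x² + y²) > 0. Set r_j = √(ρ² + (z − c_j)²), μ_1 = −z, μ_2 = (1/2) ∑_{j=1}^n (r_j + z − c_j), and ψ = ∑_{j=1}^n [ (r_j + z − c_j) log ρ − (z − c_j) log(r_j − (z − c_j)) ]. Then μ_1 · ∑_{j=1}^n log(r_j − (z − c_j)) + μ_2 · 2 log ρ − ψ = − ∑_{j=1}^n c_j log(r_j − (z − c_j)). -/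
/-- Legendre transform of the complex potential of the toric Gibbons-Hawking
metric: with `ρ = √(x² + y²) > 0`, `r_j = √(ρ² + (z − c_j)²)`, `μ₁ = −z`,
`μ₂ = (1/2) ∑_j (r_j + z − c_j)` and
`ψ = ∑_j [(r_j + z − c_j) log ρ − (z − c_j) log(r_j − (z − c_j))]`, one has
`μ₁·∑_j log(r_j − (z − c_j)) + μ₂·2 log ρ − ψ = −∑_j c_j log(r_j − (z − c_j))`. -/
theorem gibbons_hawking_legendre_transform
    (n : ℕ) (c : Fin n → ℝ) (hc : StrictMono c)
    (x y z : ℝ)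
    (ρ : ℝ) (hρ : ρ = Real.sqrt (x ^ 2 + y ^ 2)) (hρpos : 0 < ρ)
    (r : Fin n → ℝ) (hr : ∀ j, r j = Real.sqrt (ρ ^ 2 + (z - c j) ^ 2))
    (μ₁ μ₂ ψ : ℝ)
    (hμ₁ : μ₁ = -z)
    (hμ₂ : μ₂ = (1 / 2) * ∑ j, (r j + z - c j))
    (hψ : ψ = ∑ j, ((r j + z - c j) * Real.log ρ
      - (z - c j) * Real.log (r j - (z - c j)))) :
    μ₁ * ∑ j, Real.log (r j - (z - c j)) + μ₂ * (2 * Real.log ρ) - ψ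
      = -∑ j, c j * Real.log (r j - (z - c j)) := by
  subst hμ₁ hμ₂ hψ
  have h2 : (1 / 2 * ∑ j, (r j + z - c j)) * (2 * Real.log ρ)
      = ∑ j, (r j + z - c j) * Real.log ρ := by
    rw [← Finset.sum_mul]; ring
  rw [h2, Finset.mul_sum, ← Finset.sum_add_distrib, ← Finset.sum_sub_distrib,
    ← Finset.sum_neg_distrib]
  refine Finset.sum_congr rfl fun j _ => ?_
  ring
end

section
/- Let c_1 < c_2 be real numbers, ρ > 0, z ∈ ℝ, r_j = √(ρ² + (z − c_j)²) for j = 1, 2, and μ_2 = (1/2) [ (r_1 + z − c_1) + (r_2 + z − c_2) ]. Then ρ² = 4 μ_2 (μ_2 − (z − c_1)) (μ_2 − (z − c_2)) (μ_2 − (z − c_1) − (z − c_2)) / (2 μ_2 − (z − c_1) − (z − c_2))². -/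
/-- Solving the `n = 2` moment-map relation for `ρ²`: with `c₁ < c₂`, `ρ > 0`,
`r_j = √(ρ² + (z − c_j)²)` and `μ₂ = (1/2)[(r₁ + z − c₁) + (r₂ + z − c₂)]`, one has
`ρ² = 4μ₂(μ₂ − (z−c₁))(μ₂ − (z−c₂))(μ₂ − (z−c₁) − (z−c₂)) / (2μ₂ − (z−c₁) − (z−c₂))²`. -/
theorem moment_map_inversion_n_eq_two
    (c₁ c₂ : ℝ) (hc : c₁ < c₂)
    (ρ z : ℝ) (hρ : 0 < ρ)
    (r₁ r₂ : ℝ)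
    (hr₁ : r₁ = Real.sqrt (ρ ^ 2 + (z - c₁) ^ 2))
    (hr₂ : r₂ = Real.sqrt (ρ ^ 2 + (z - c₂) ^ 2))
    (μ₂ : ℝ) (hμ₂ : μ₂ = (1 / 2) * ((r₁ + z - c₁) + (r₂ + z - c₂))) :
    ρ ^ 2 = 4 * μ₂ * (μ₂ - (z - c₁)) * (μ₂ - (z - c₂)) * (μ₂ - (z - c₁) - (z - c₂))
      / (2 * μ₂ - (z - c₁) - (z - c₂)) ^ 2 := by
  have h1 : r₁ ^ 2 = ρ ^ 2 + (z - c₁) ^ 2 := by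
    rw [hr₁]; exact Real.sq_sqrt (by positivity)
  have h2 : r₂ ^ 2 = ρ ^ 2 + (z - c₂) ^ 2 := by
    rw [hr₂]; exact Real.sq_sqrt (by positivity)
  have hp1 : 0 < r₁ := by
    rw [hr₁]; exact Real.sqrt_pos.mpr (by positivity)
  have hp2 : 0 < r₂ := by
    rw [hr₂]; exact Real.sqrt_pos.mpr (by positivity)
  have hden : 2 * μ₂ - (z - c₁) - (z - c₂) = r₁ + r₂ := by
    rw [hμ₂]; ring
  rw [hden, eq_div_iff (by positivity)]
  subst hμ₂
  nlinarith [sq_nonneg (r₁ + r₂), sq_nonneg (r₁ - r₂), sq_nonneg ρ, h1, h2,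
    mul_pos hp1 hp2]
end

section
/- Let c_1 < c_2 be real numbers, c = c_2 − c_1, and (α, β) ∈ ℂ². Set t = |α|², Q = √(|β|²(1 + t)² + c²), z = (1/2)(c_1 + c_2) − ((1 − t)/(2(1 + t))) Q, ρ = |α| |β|, and r_j = √(ρ² + (z − c_j)²) for j = 1, 2. Then: r_1 = Q/2 − c(1 − t)/(2(1 + t)); r_2 = Q/2 + c(1 − t)/(2(1 + t)); r_1 − (z − c_1) = (Q − c)/(1 + t); r_2 − (z − c_2) = (Q + c)/(1 + t); and μ_2 := (1/2)[(r_1 + z − c_1) + (r_2 + z − c_2)] = t Q/(1 + t). -/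
/-! With `s = (1 - t)/(1 + t)` one has `z - c₁ = (c - sQ)/2` and `z - c₂ = (-c - sQ)/2`, and the
identity `(Q - cs)² - (c - sQ)² = (Q² - c²)(1 - s²) = 4ρ²` shows that `r₁ = (Q - cs)/2`; replacing
`c` by `-c` gives `r₂`. Taking the square root is legitimate because `|s| ≤ 1` and `|c| ≤ Q`.
The remaining formulas are then rational identities. -/

namespace EguchiHanson

variable {t c Q : ℝ}

lemma abs_mul_one_sub_div_one_add_le (ht : 0 ≤ t) : |c * (1 - t) / (1 + t)| ≤ |c| := by
  rw [mul_div_assoc, abs_mul]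
  refine mul_le_of_le_one_right (abs_nonneg c) ?_
  rw [abs_div, abs_of_pos (by linarith : (0 : ℝ) < 1 + t), div_le_one (by linarith)]
  exact abs_le.2 ⟨by linarith, by linarith⟩

lemma half_sub_mul_one_sub_div_nonneg (ht : 0 ≤ t) (hcQ : |c| ≤ Q) :
    0 ≤ Q / 2 - c * (1 - t) / (2 * (1 + t)) := by
  have h := (abs_le.1 ((abs_mul_one_sub_div_one_add_le (c := c) ht).trans hcQ)).2
  have : c * (1 - t) / (2 * (1 + t)) = c * (1 - t) / (1 + t) / 2 := by
    rw [div_div, mul_comm 2]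
  linarith

lemma mul_add_sq_eq_sq_of_sq_eq (x : ℝ) (ht : 0 ≤ t) (hQ : Q ^ 2 = x * (1 + t) ^ 2 + c ^ 2) :
    t * x + (c / 2 - (1 - t) / (2 * (1 + t)) * Q) ^ 2 = (Q / 2 - c * (1 - t) / (2 * (1 + t))) ^ 2 := by
  have h1t : (1 + t) ≠ 0 := by positivity
  field_simp
  linear_combination (-(4 * t)) * hQ

lemma sqrt_add_sq_sub_eq {x : ℝ} (hx : 0 ≤ x) (ht : 0 ≤ t)
    (hQ : Q = √(x * (1 + t) ^ 2 + c ^ 2)) :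
    √(t * x + (c / 2 - (1 - t) / (2 * (1 + t)) * Q) ^ 2) = Q / 2 - c * (1 - t) / (2 * (1 + t)) := by
  have hQsq : Q ^ 2 = x * (1 + t) ^ 2 + c ^ 2 := by rw [hQ, Real.sq_sqrt (by positivity)]
  have hcQ : |c| ≤ Q := by
    rw [hQ, ← Real.sqrt_sq_eq_abs]
    exact Real.sqrt_le_sqrt (by nlinarith)
  rw [mul_add_sq_eq_sq_of_sq_eq x ht hQsq, Real.sqrt_sq (half_sub_mul_one_sub_div_nonneg ht hcQ)]

end EguchiHanson

open EguchiHanson in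
theorem eguchi_hanson_alpha_beta_formulas_general
    (c₁ c₂ : ℝ) (c : ℝ) (hc : c = c₂ - c₁)
    (α β : ℂ)
    (t Q z ρ r₁ r₂ : ℝ)
    (ht : t = ‖α‖ ^ 2)
    (hQ : Q = Real.sqrt (‖β‖ ^ 2 * (1 + t) ^ 2 + c ^ 2))
    (hz : z = (1 / 2) * (c₁ + c₂) - ((1 - t) / (2 * (1 + t))) * Q)
    (hρ : ρ = ‖α‖ * ‖β‖)
    (hr₁ : r₁ = Real.sqrt (ρ ^ 2 + (z - c₁) ^ 2))
    (hr₂ : r₂ = Real.sqrt (ρ ^ 2 + (z - c₂) ^ 2)) :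
    r₁ = Q / 2 - c * (1 - t) / (2 * (1 + t)) ∧
    r₂ = Q / 2 + c * (1 - t) / (2 * (1 + t)) ∧
    r₁ - (z - c₁) = (Q - c) / (1 + t) ∧
    r₂ - (z - c₂) = (Q + c) / (1 + t) ∧
    (1 / 2) * ((r₁ + z - c₁) + (r₂ + z - c₂)) = t * Q / (1 + t) := by
  have ht0 : 0 ≤ t := ht ▸ sq_nonneg _
  have h1t : 1 + t ≠ 0 := by positivity
  have hρsq : ρ ^ 2 = t * ‖β‖ ^ 2 := by rw [hρ, ht]; ring
  have hz₁ : z - c₁ = c / 2 - (1 - t) / (2 * (1 + t)) * Q := by rw [hz, hc]; ring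
  have hz₂ : z - c₂ = -c / 2 - (1 - t) / (2 * (1 + t)) * Q := by rw [hz, hc]; ring
  have hR₁ : r₁ = Q / 2 - c * (1 - t) / (2 * (1 + t)) := by
    rw [hr₁, hρsq, hz₁, sqrt_add_sq_sub_eq (sq_nonneg _) ht0 hQ]
  have hR₂ : r₂ = Q / 2 + c * (1 - t) / (2 * (1 + t)) := by
    rw [hr₂, hρsq, hz₂, sqrt_add_sq_sub_eq (sq_nonneg _) ht0 (by rwa [neg_sq])]
    ring
  refine ⟨hR₁, hR₂, ?_, ?_, ?_⟩
  · rw [hR₁, hz₁]; field_simp; ring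
  · rw [hR₂, hz₂]; field_simp; ring
  · rw [hR₁, hR₂, hz, hc]; field_simp; ring

/-- Geometry of the `n = 2` Gibbons-Hawking (Eguchi-Hanson) space in the local
complex coordinates `(α, β)`: with `c = c₂ − c₁`, `t = |α|²`,
`Q = √(|β|²(1+t)² + c²)`, `z = (1/2)(c₁+c₂) − ((1−t)/(2(1+t)))Q`, `ρ = |α||β|`,
`r_j = √(ρ² + (z − c_j)²)`, one has explicit formulas for `r₁`, `r₂`,
`r_j − (z − c_j)` and the moment-map component `μ₂`. -/
theorem eguchi_hanson_alpha_beta_formulas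
    (c₁ c₂ : ℝ) (hc₁₂ : c₁ < c₂) (c : ℝ) (hc : c = c₂ - c₁)
    (α β : ℂ)
    (t Q z ρ r₁ r₂ : ℝ)
    (ht : t = ‖α‖ ^ 2)
    (hQ : Q = Real.sqrt (‖β‖ ^ 2 * (1 + t) ^ 2 + c ^ 2))
    (hz : z = (1 / 2) * (c₁ + c₂) - ((1 - t) / (2 * (1 + t))) * Q)
    (hρ : ρ = ‖α‖ * ‖β‖)
    (hr₁ : r₁ = Real.sqrt (ρ ^ 2 + (z - c₁) ^ 2))
    (hr₂ : r₂ = Real.sqrt (ρ ^ 2 + (z - c₂) ^ 2)) :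
    r₁ = Q / 2 - c * (1 - t) / (2 * (1 + t)) ∧
    r₂ = Q / 2 + c * (1 - t) / (2 * (1 + t)) ∧
    r₁ - (z - c₁) = (Q - c) / (1 + t) ∧
    r₂ - (z - c₂) = (Q + c) / (1 + t) ∧
    (1 / 2) * ((r₁ + z - c₁) + (r₂ + z - c₂)) = t * Q / (1 + t) :=
  eguchi_hanson_alpha_beta_formulas_general c₁ c₂ c hc α β t Q z ρ r₁ r₂ ht hQ hz hρ hr₁ hr₂
end

section
/- Let c > 0 and define F : ℂ² → ℝ² by F(α, β) = (m_1, m_2) with Q = √(|β|²(1 + |α|²)² + c²), m_1 = ((1 − |α|²)/(2(1 + |α|²))) Q and m_2 = (|α|²/(1 + |α|²)) Q. Then the image of F is exactly { (m_1, m_2) ∈ ℝ² : m_2 ≥ 0, m_1 + m_2 ≥ c/2, 2 m_1 + m_2 > 0 }. -/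
/-!
Writing `t = |α|²`, the map factors through `(α, β) ↦ (t, Q)`, whose image is the quadrant
`t ≥ 0, Q ≥ c` since `|β|` can be chosen to make `Q` any value `≥ c`. On the second factor
`m₁ + m₂ = Q / 2` and `2m₁ + m₂ = Q / (1 + t)`, so `(t, Q)` is recovered from `m` as
`Q = 2(m₁ + m₂)`, `t = m₂ / (2m₁ + m₂)`, and the quadrant corresponds exactly to the three
inequalities.
-/

open Set

/-- The Eguchi-Hanson moment map in the coordinates `t = |α|²` and `Q`. -/
noncomputable def ehMoment (t Q : ℝ) : ℝ × ℝ :=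
  ((1 - t) / (2 * (1 + t)) * Q, t / (1 + t) * Q)

lemma ehMoment_fst_add_snd {t : ℝ} (ht : 1 + t ≠ 0) (Q : ℝ) :
    (ehMoment t Q).1 + (ehMoment t Q).2 = Q / 2 := by
  simp only [ehMoment]
  field_simp
  ring

lemma two_mul_ehMoment_fst_add_snd {t : ℝ} (ht : 1 + t ≠ 0) (Q : ℝ) :
    2 * (ehMoment t Q).1 + (ehMoment t Q).2 = Q / (1 + t) := by
  simp only [ehMoment]
  field_simp
  ring

lemma ehMoment_apply_inverse {m : ℝ × ℝ} (hs : 2 * m.1 + m.2 ≠ 0) (hsum : m.1 + m.2 ≠ 0) :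
    ehMoment (m.2 / (2 * m.1 + m.2)) (2 * (m.1 + m.2)) = m := by
  have h1t : 1 + m.2 / (2 * m.1 + m.2) = 2 * (m.1 + m.2) / (2 * m.1 + m.2) := by
    field_simp
    ring
  simp only [ehMoment, h1t]
  ext
  · field_simp
    ring
  · field_simp

lemma image2_ehMoment {c : ℝ} (hc : 0 < c) :
    image2 ehMoment (Ici 0) (Ici c) =
      {m : ℝ × ℝ | 0 ≤ m.2 ∧ c / 2 ≤ m.1 + m.2 ∧ 0 < 2 * m.1 + m.2} := by
  ext m
  constructor
  · rintro ⟨t, ht : 0 ≤ t, Q, hQ : c ≤ Q, rfl⟩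
    have h1t : 0 < 1 + t := by linarith
    refine ⟨?_, ?_, ?_⟩
    · exact mul_nonneg (div_nonneg ht h1t.le) (hc.le.trans hQ)
    · rw [ehMoment_fst_add_snd h1t.ne']
      linarith
    · rw [two_mul_ehMoment_fst_add_snd h1t.ne']
      exact div_pos (hc.trans_le hQ) h1t
  · rintro ⟨h2, h12, hs⟩
    exact ⟨_, div_nonneg h2 hs.le, _, show c ≤ 2 * (m.1 + m.2) by linarith,
      ehMoment_apply_inverse hs.ne' (by linarith)⟩

lemma exists_sqrt_sq_mul_sq_add_sq_eq {k c Q : ℝ} (hk : 0 < k) (hc : 0 ≤ c) (hQ : c ≤ Q) :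
    ∃ b, 0 ≤ b ∧ √(b ^ 2 * k ^ 2 + c ^ 2) = Q := by
  refine ⟨√(Q ^ 2 - c ^ 2) / k, by positivity, ?_⟩
  rw [div_pow, div_mul_cancel₀ _ (by positivity), Real.sq_sqrt (by nlinarith), sub_add_cancel,
    Real.sqrt_sq (hc.trans hQ)]

lemma range_sq_norm_sqrt {E F : Type*} [SeminormedAddCommGroup E] [NormedSpace ℝ E]
    [NontrivialTopology E] [SeminormedAddCommGroup F] [NormedSpace ℝ F] [NontrivialTopology F]
    {c : ℝ} (hc : 0 ≤ c) :
    range (fun p : E × F => (‖p.1‖ ^ 2, √(‖p.2‖ ^ 2 * (1 + ‖p.1‖ ^ 2) ^ 2 + c ^ 2))) =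
      Ici 0 ×ˢ Ici c := by
  ext ⟨t, Q⟩
  constructor
  · rintro ⟨p, hp⟩
    rw [Prod.mk.injEq] at hp
    rw [mem_prod, mem_Ici, mem_Ici, ← hp.1, ← hp.2]
    refine ⟨sq_nonneg _, (Real.le_sqrt hc (by positivity)).mpr ?_⟩
    nlinarith [sq_nonneg (‖p.2‖ * (1 + ‖p.1‖ ^ 2))]
  · rintro ⟨ht : 0 ≤ t, hQ : c ≤ Q⟩
    obtain ⟨x, hx⟩ := exists_norm_eq E (Real.sqrt_nonneg t)
    obtain ⟨b, hb, hbQ⟩ := exists_sqrt_sq_mul_sq_add_sq_eq (k := 1 + t) (by linarith) hc hQ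
    obtain ⟨y, hy⟩ := exists_norm_eq F hb
    have hxt : ‖x‖ ^ 2 = t := by rw [hx, Real.sq_sqrt ht]
    exact ⟨(x, y), by simp only [hxt, hy, hbQ]⟩

/-- The image of the moment map of the Eguchi-Hanson metric with parameter
`c > 0` in the `(α, β)` coordinate chart: with `Q = √(|β|²(1+|α|²)² + c²)`,
`F(α,β) = (((1−|α|²)/(2(1+|α|²)))Q, (|α|²/(1+|α|²))Q)`, the range of `F` is
exactly `{(m₁, m₂) : m₂ ≥ 0, m₁ + m₂ ≥ c/2, 2m₁ + m₂ > 0}`. -/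
theorem eguchi_hanson_moment_map_image
    (c : ℝ) (hc : 0 < c)
    (F : ℂ × ℂ → ℝ × ℝ)
    (hF : ∀ α β : ℂ, F (α, β) =
      (((1 - ‖α‖ ^ 2) / (2 * (1 + ‖α‖ ^ 2))) *
          Real.sqrt (‖β‖ ^ 2 * (1 + ‖α‖ ^ 2) ^ 2 + c ^ 2),
        (‖α‖ ^ 2 / (1 + ‖α‖ ^ 2)) *
          Real.sqrt (‖β‖ ^ 2 * (1 + ‖α‖ ^ 2) ^ 2 + c ^ 2))) :
    Set.range F =
      { m : ℝ × ℝ | 0 ≤ m.2 ∧ c / 2 ≤ m.1 + m.2 ∧ 0 < 2 * m.1 + m.2 } := by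
  have hF_comp : F = Function.uncurry ehMoment ∘
      fun p : ℂ × ℂ => (‖p.1‖ ^ 2, √(‖p.2‖ ^ 2 * (1 + ‖p.1‖ ^ 2) ^ 2 + c ^ 2)) :=
    funext fun p => hF p.1 p.2
  rw [hF_comp, range_comp, range_sq_norm_sqrt hc.le, image_uncurry_prod, image2_ehMoment hc]
end

section
/- Let c_1 < c_2 be real numbers, c = c_2 − c_1, and (x, y, z) ∈ ℝ³ with p := x² + y² > 0. Set r_j = √(p + (z − c_j)²) for j = 1, 2, s = (r_1 − (z − c_1))(r_2 − (z − c_2)) (so s > 0), and R = (s + p)² + c² s. Then: z − c_1 = c/2 − ((s − p) √R)/(2 √s (s + p)); r_1 = −c(s − p)/(2(s + p)) + √R/(2√s); r_2 = c(s − p)/(2(s + p)) + √R/(2√s); and V := 1/(2r_1) + 1/(2r_2) = 2 √s (s + p)² √R / ( (s + p)⁴ + 4 s² p c² ). -/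
/-- Formulas (116)–(120) of the `n = 2` Gibbons-Hawking space in Hessian local
complex coordinates: with `c = c₂ − c₁`, `p = x² + y² > 0`,
`r_j = √(p + (z − c_j)²)`, `s = (r₁ − (z−c₁))(r₂ − (z−c₂))` and
`R = (s + p)² + c² s`, one has
`z − c₁ = c/2 − (s−p)√R/(2√s(s+p))`,
`r₁ = −c(s−p)/(2(s+p)) + √R/(2√s)`, `r₂ = c(s−p)/(2(s+p)) + √R/(2√s)`, and
`1/(2r₁) + 1/(2r₂) = 2√s(s+p)²√R/((s+p)⁴ + 4s²pc²)`. -/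
theorem gibbons_hawking_n_eq_two_hessian_formulas
    (c₁ c₂ : ℝ) (hc₁₂ : c₁ < c₂) (c : ℝ) (hc : c = c₂ - c₁)
    (x y z : ℝ) (p : ℝ) (hp : p = x ^ 2 + y ^ 2) (hppos : 0 < p)
    (r₁ r₂ : ℝ)
    (hr₁ : r₁ = Real.sqrt (p + (z - c₁) ^ 2))
    (hr₂ : r₂ = Real.sqrt (p + (z - c₂) ^ 2))
    (s : ℝ) (hs : s = (r₁ - (z - c₁)) * (r₂ - (z - c₂)))
    (R : ℝ) (hR : R = (s + p) ^ 2 + c ^ 2 * s) :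
    z - c₁ = c / 2 - (s - p) * Real.sqrt R / (2 * Real.sqrt s * (s + p)) ∧
    r₁ = -c * (s - p) / (2 * (s + p)) + Real.sqrt R / (2 * Real.sqrt s) ∧
    r₂ = c * (s - p) / (2 * (s + p)) + Real.sqrt R / (2 * Real.sqrt s) ∧
    1 / (2 * r₁) + 1 / (2 * r₂)
      = 2 * Real.sqrt s * (s + p) ^ 2 * Real.sqrt R
        / ((s + p) ^ 4 + 4 * s ^ 2 * p * c ^ 2) := by
  set u₁ : ℝ := r₁ - (z - c₁) with hu₁
  set u₂ : ℝ := r₂ - (z - c₂) with hu₂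
  have hr1sq : r₁ ^ 2 = p + (z - c₁) ^ 2 := by
    rw [hr₁, Real.sq_sqrt (by positivity)]
  have hr2sq : r₂ ^ 2 = p + (z - c₂) ^ 2 := by
    rw [hr₂, Real.sq_sqrt (by positivity)]
  have hr1pos : 0 < r₁ := hr₁ ▸ Real.sqrt_pos.2 (by positivity)
  have hr2pos : 0 < r₂ := hr₂ ▸ Real.sqrt_pos.2 (by positivity)
  have hu1pos : 0 < u₁ := by
    have : |z - c₁| < r₁ := by
      rw [← Real.sqrt_sq_eq_abs, hr₁]
      exact Real.sqrt_lt_sqrt (by positivity) (by linarith)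
    have := abs_lt.1 this
    simp only [hu₁]; linarith [this.2]
  have hu2pos : 0 < u₂ := by
    have : |z - c₂| < r₂ := by
      rw [← Real.sqrt_sq_eq_abs, hr₂]
      exact Real.sqrt_lt_sqrt (by positivity) (by linarith)
    have := abs_lt.1 this
    simp only [hu₂]; linarith [this.2]
  have hsu : s = u₁ * u₂ := hs
  clear_value u₁ u₂
  have hspos : 0 < s := hsu ▸ mul_pos hu1pos hu2pos
  have hsp : 0 < s + p := by linarith
  have h1 : u₁ ^ 2 + 2 * u₁ * (z - c₁) = p := by
    rw [hu₁]; linear_combination hr1sq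
  have h2 : u₂ ^ 2 + 2 * u₂ * (z - c₂) = p := by
    rw [hu₂]; linear_combination hr2sq
  have hz1 : z - c₁ = (p - u₁ ^ 2) / (2 * u₁) := by
    rw [eq_div_iff (by positivity)]; linear_combination h1
  have hz2 : z - c₂ = (p - u₂ ^ 2) / (2 * u₂) := by
    rw [eq_div_iff (by positivity)]; linear_combination h2
  have hr1' : r₁ = (p + u₁ ^ 2) / (2 * u₁) := by
    rw [eq_div_iff (by positivity)]; linear_combination (-2) * u₁ * hu₁ + h1
  have hr2' : r₂ = (p + u₂ ^ 2) / (2 * u₂) := by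
    rw [eq_div_iff (by positivity)]; linear_combination (-2) * u₂ * hu₂ + h2
  have hc' : c * (2 * s) = (u₂ - u₁) * (p + s) := by
    have hcz : c = (z - c₁) - (z - c₂) := by rw [hc]; ring
    rw [hcz, hz1, hz2, hsu]
    field_simp; ring
  have hsR : s * R = ((u₁ + u₂) * (s + p) / 2) ^ 2 := by
    rw [hR]
    have expand : s * ((s + p) ^ 2 + c ^ 2 * s) - ((u₁ + u₂) * (s + p) / 2) ^ 2
        = ((c * (2 * s)) ^ 2 - ((u₂ - u₁) * (p + s)) ^ 2) / 4 := by
      rw [hsu]; ring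
    linear_combination expand + ((c * (2 * s) + (u₂ - u₁) * (p + s)) / 4) * hc'
  have hK : Real.sqrt s * Real.sqrt R = (u₁ + u₂) * (s + p) / 2 := by
    rw [← Real.sqrt_mul hspos.le, hsR, Real.sqrt_sq (by positivity)]
  have hsqs : Real.sqrt s > 0 := Real.sqrt_pos.2 hspos
  have hsqs2 : Real.sqrt s * Real.sqrt s = s := Real.mul_self_sqrt hspos.le
  have hRdiv : Real.sqrt R / (2 * Real.sqrt s)
      = (u₁ + u₂) * (s + p) / (4 * s) := by
    rw [div_eq_div_iff (by positivity) (by positivity)]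
    linear_combination (-4 * Real.sqrt R) * hsqs2 + 4 * Real.sqrt s * hK
  have hcval : c = (u₂ - u₁) * (p + s) / (2 * s) := by
    rw [eq_div_iff (by positivity)]; linear_combination hc'
  have e1 : (s - p) * Real.sqrt R / (2 * Real.sqrt s * (s + p))
      = (s - p) * (u₁ + u₂) / (4 * s) := by
    rw [div_eq_div_iff (by positivity) (by positivity)]
    linear_combination (s - p) * ((-4 * Real.sqrt R) * hsqs2 + 4 * Real.sqrt s * hK)
  have hupne : u₁ * u₂ + p ≠ 0 := by positivity
  refine ⟨?_, ?_, ?_, ?_⟩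
  · rw [hz1, e1, hcval, hsu]
    field_simp
    ring
  · rw [hr1', hcval, hRdiv, hsu]
    field_simp
    ring
  · rw [hr2', hcval, hRdiv, hsu]
    field_simp
    ring
  · have hden : (0:ℝ) < (s + p) ^ 4 + 4 * s ^ 2 * p * c ^ 2 := by positivity
    have hnum : 2 * Real.sqrt s * (s + p) ^ 2 * Real.sqrt R
        = (u₁ + u₂) * (s + p) ^ 3 := by
      calc 2 * Real.sqrt s * (s + p) ^ 2 * Real.sqrt R
          = 2 * (s + p) ^ 2 * (Real.sqrt s * Real.sqrt R) := by ring
        _ = (u₁ + u₂) * (s + p) ^ 3 := by rw [hK]; ring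
    rw [hnum, div_add_div _ _ (by positivity) (by positivity),
      div_eq_div_iff (by positivity) hden.ne']
    rw [hr1', hr2', hcval, hsu]
    field_simp
    ring
end

section
/- Let b > 0 and define, on the domain D = { (α, β) ∈ ℂ² : |β|²(1 + |α|²)² > b² }, the map F(α, β) = (m_1, m_2) with Q = √(|β|²(1 + |α|²)² − b²), m_1 = ((1 − |α|²)/(2(1 + |α|²))) Q and m_2 = (|α|²/(1 + |α|²)) Q. Then the image of F is exactly { (m_1, m_2) ∈ ℝ² : m_2 ≥ 0, 2 m_1 + m_2 > 0 }. -/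
/-!
Write `a = |α|²` and `Q = √(|β|²(1+a)² − b²)`. Then `F = (Q(1−a)/(2(1+a)), Qa/(1+a))`, so
`m₂ = Qa/(1+a)` and `2m₁ + m₂ = Q/(1+a)`; hence `m₂ ≥ 0` and `2m₁ + m₂ > 0` exactly when
`a ≥ 0` and `Q > 0`, and this correspondence is invertible: `a = m₂/(2m₁+m₂)`, `Q = 2m₁ + 2m₂`.
Finally, on the outer region `(α, β) ↦ (a, Q)` is onto `[0, ∞) × (0, ∞)`: take `α = √a` real and
`β = √(Q² + b²)/(1 + a)` real.
-/

open Set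

noncomputable section

def reducedMoment (p : ℝ × ℝ) : ℝ × ℝ :=
  ((1 - p.1) / (2 * (1 + p.1)) * p.2, p.1 / (1 + p.1) * p.2)

def reducedCoords (b : ℝ) (q : ℂ × ℂ) : ℝ × ℝ :=
  (‖q.1‖ ^ 2, √(‖q.2‖ ^ 2 * (1 + ‖q.1‖ ^ 2) ^ 2 - b ^ 2))

end

theorem two_mul_fst_add_snd_reducedMoment {p : ℝ × ℝ} (hp : 0 ≤ p.1) :
    2 * (reducedMoment p).1 + (reducedMoment p).2 = p.2 / (1 + p.1) := by
  have : 1 + p.1 ≠ 0 := by positivity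
  simp only [reducedMoment]
  field_simp
  ring

theorem image_reducedMoment :
    reducedMoment '' (Ici 0 ×ˢ Ioi 0) = {m : ℝ × ℝ | 0 ≤ m.2 ∧ 0 < 2 * m.1 + m.2} := by
  ext m
  constructor
  · rintro ⟨p, ⟨ha : 0 ≤ p.1, hQ : 0 < p.2⟩, rfl⟩
    refine ⟨by simp only [reducedMoment]; positivity, ?_⟩
    rw [two_mul_fst_add_snd_reducedMoment ha]
    positivity
  · obtain ⟨m₁, m₂⟩ := m
    rintro ⟨hm₂, hS⟩
    refine ⟨(m₂ / (2 * m₁ + m₂), 2 * m₁ + 2 * m₂),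
      ⟨div_nonneg hm₂ hS.le, show 0 < 2 * m₁ + 2 * m₂ by linarith⟩, ?_⟩
    have : m₁ + m₂ ≠ 0 := by linarith
    simp only [reducedMoment]
    ext <;> field_simp <;> ring

theorem image_reducedCoords (b : ℝ) :
    reducedCoords b '' {q : ℂ × ℂ | b ^ 2 < ‖q.2‖ ^ 2 * (1 + ‖q.1‖ ^ 2) ^ 2} = Ici 0 ×ˢ Ioi 0 := by
  ext p
  constructor
  · rintro ⟨q, hq, rfl⟩
    exact ⟨sq_nonneg ‖q.1‖, Real.sqrt_pos.mpr (sub_pos.mpr hq)⟩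
  · obtain ⟨a, Q⟩ := p
    rintro ⟨ha : 0 ≤ a, hQ : 0 < Q⟩
    have hβ : 0 ≤ √(Q ^ 2 + b ^ 2) / (1 + a) := by positivity
    have hβsq : √(Q ^ 2 + b ^ 2) ^ 2 / (1 + a) ^ 2 * (1 + a) ^ 2 = Q ^ 2 + b ^ 2 := by
      rw [Real.sq_sqrt (by positivity), div_mul_cancel₀ _ (by positivity)]
    refine ⟨((√a : ℝ), (√(Q ^ 2 + b ^ 2) / (1 + a) : ℝ)), ?_, ?_⟩
    · simp only [mem_ofPred_eq, Complex.norm_of_nonneg (Real.sqrt_nonneg a),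
        Complex.norm_of_nonneg hβ, Real.sq_sqrt ha, div_pow, hβsq]
      exact lt_add_of_pos_left _ (pow_pos hQ 2)
    · simp only [reducedCoords, Complex.norm_of_nonneg (Real.sqrt_nonneg a),
        Complex.norm_of_nonneg hβ, Real.sq_sqrt ha, div_pow, hβsq, add_sub_cancel_right,
        Real.sqrt_sq hQ.le]

theorem eguchi_hanson_phase_change_outer_image_general
    (b : ℝ)
    (F : ℂ × ℂ → ℝ × ℝ)
    (hF : ∀ α β : ℂ, F (α, β) =
      (((1 - ‖α‖ ^ 2) / (2 * (1 + ‖α‖ ^ 2))) *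
          Real.sqrt (‖β‖ ^ 2 * (1 + ‖α‖ ^ 2) ^ 2 - b ^ 2),
        (‖α‖ ^ 2 / (1 + ‖α‖ ^ 2)) *
          Real.sqrt (‖β‖ ^ 2 * (1 + ‖α‖ ^ 2) ^ 2 - b ^ 2))) :
    F '' { q : ℂ × ℂ |
        b ^ 2 < ‖q.2‖ ^ 2 * (1 + ‖q.1‖ ^ 2) ^ 2 }
      = { m : ℝ × ℝ | 0 ≤ m.2 ∧ 0 < 2 * m.1 + m.2 } := by
  have hF' : F = reducedMoment ∘ reducedCoords b := funext fun q => hF q.1 q.2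
  rw [hF', image_comp, image_reducedCoords, image_reducedMoment]

/-- Phase change of the Eguchi-Hanson metric, Case 1: for `b > 0`, on the domain
`D = {(α, β) : |β|²(1+|α|²)² > b²}`, the map
`F(α,β) = (((1−|α|²)/(2(1+|α|²)))Q, (|α|²/(1+|α|²))Q)` with
`Q = √(|β|²(1+|α|²)² − b²)` has image exactly
`{(m₁, m₂) : m₂ ≥ 0, 2m₁ + m₂ > 0}`. -/
theorem eguchi_hanson_phase_change_outer_image
    (b : ℝ) (hb : 0 < b)
    (F : ℂ × ℂ → ℝ × ℝ)
    (hF : ∀ α β : ℂ, F (α, β) =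
      (((1 - ‖α‖ ^ 2) / (2 * (1 + ‖α‖ ^ 2))) *
          Real.sqrt (‖β‖ ^ 2 * (1 + ‖α‖ ^ 2) ^ 2 - b ^ 2),
        (‖α‖ ^ 2 / (1 + ‖α‖ ^ 2)) *
          Real.sqrt (‖β‖ ^ 2 * (1 + ‖α‖ ^ 2) ^ 2 - b ^ 2))) :
    F '' { q : ℂ × ℂ |
        b ^ 2 < ‖q.2‖ ^ 2 * (1 + ‖q.1‖ ^ 2) ^ 2 }
      = { m : ℝ × ℝ | 0 ≤ m.2 ∧ 0 < 2 * m.1 + m.2 } :=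
  eguchi_hanson_phase_change_outer_image_general b F hF
end

section
/- Let b > 0 and define, on the domain D = { (α, β) ∈ ℂ² : |β|²(1 + |α|²)² < b² }, the map F(α, β) = (m_1, m_2) with S = √(b² − |β|²(1 + |α|²)²), m_1 = ((1 − |α|²)/(2(1 + |α|²))) S and m_2 = (|α|²/(1 + |α|²)) S. Then the image of F is exactly { (m_1, m_2) ∈ ℝ² : m_2 ≥ 0, 2 m_1 + m_2 > 0, m_1 + m_2 ≤ b/2 }. -/
/-!
With `A = ‖α‖²` and `S = √(b² - ‖β‖²(1 + A)²)` the map reads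
`m₁ = (1 - A) S / (2(1 + A))`, `m₂ = A S / (1 + A)`, so that
`m₁ + m₂ = S / 2` and `2m₁ + m₂ = S / (1 + A)`.
As `(α, β)` runs over the domain, `(A, S)` runs over exactly `[0, ∞) × (0, b]`, and the map
`(A, S) ↦ (m₁, m₂)` sends that set onto the stated region, with inverse
`S = 2(m₁ + m₂)`, `A = m₂ / (2m₁ + m₂)`.
-/

open Set

noncomputable section

def ehMomentMap (A S : ℝ) : ℝ × ℝ :=
  ((1 - A) / (2 * (1 + A)) * S, A / (1 + A) * S)

def ehMomentCoords {E F : Type*} [Norm E] [Norm F] (b : ℝ) (q : E × F) : ℝ × ℝ :=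
  (‖q.1‖ ^ 2, √(b ^ 2 - ‖q.2‖ ^ 2 * (1 + ‖q.1‖ ^ 2) ^ 2))

end

section MomentMap

variable {A S : ℝ}

lemma ehMomentMap_fst_add_snd (hA : 1 + A ≠ 0) :
    (ehMomentMap A S).1 + (ehMomentMap A S).2 = S / 2 := by
  simp only [ehMomentMap]
  field_simp
  ring

lemma two_mul_ehMomentMap_fst_add_snd (hA : 1 + A ≠ 0) :
    2 * (ehMomentMap A S).1 + (ehMomentMap A S).2 = S / (1 + A) := by
  simp only [ehMomentMap]
  field_simp
  ring

lemma ehMomentMap_inverse {m : ℝ × ℝ} (h₁ : 2 * m.1 + m.2 ≠ 0) (h₂ : m.1 + m.2 ≠ 0) :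
    ehMomentMap (m.2 / (2 * m.1 + m.2)) (2 * (m.1 + m.2)) = m := by
  have h₃ : 2 * m.1 + m.2 + m.2 ≠ 0 := by contrapose! h₂; linarith
  ext <;> simp only [ehMomentMap] <;> field_simp <;> ring

lemma image_ehMomentMap (b : ℝ) :
    (fun p : ℝ × ℝ ↦ ehMomentMap p.1 p.2) '' (Ici 0 ×ˢ Ioc 0 b)
      = {m : ℝ × ℝ | 0 ≤ m.2 ∧ 0 < 2 * m.1 + m.2 ∧ m.1 + m.2 ≤ b / 2} := by
  ext m
  constructor
  · rintro ⟨⟨A, S⟩, ⟨hA, hS, hSb⟩, rfl⟩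
    rw [mem_Ici] at hA
    have hA' : 0 < 1 + A := by linarith
    refine ⟨mul_nonneg (div_nonneg hA hA'.le) hS.le, ?_, ?_⟩
    · rw [two_mul_ehMomentMap_fst_add_snd hA'.ne']
      positivity
    · rw [ehMomentMap_fst_add_snd hA'.ne']
      linarith
  · rintro ⟨h₂, h₁, hb⟩
    refine ⟨(m.2 / (2 * m.1 + m.2), 2 * (m.1 + m.2)), ⟨?_, ?_, ?_⟩, ?_⟩
    · exact div_nonneg h₂ h₁.le
    · linarith
    · linarith
    · exact ehMomentMap_inverse h₁.ne' (by linarith)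

end MomentMap

lemma image_ehMomentCoords {E F : Type*} [NormedAddCommGroup E] [NormedSpace ℝ E] [Nontrivial E]
    [NormedAddCommGroup F] [NormedSpace ℝ F] [Nontrivial F] {b : ℝ} (hb : 0 ≤ b) :
    ehMomentCoords b '' {q : E × F | ‖q.2‖ ^ 2 * (1 + ‖q.1‖ ^ 2) ^ 2 < b ^ 2}
      = Ici 0 ×ˢ Ioc 0 b := by
  ext ⟨A, S⟩
  constructor
  · rintro ⟨⟨x, y⟩, hq, hxy⟩
    obtain ⟨rfl, rfl⟩ := Prod.mk.inj hxy
    simp only [mem_prod, mem_Ici, mem_Ioc]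
    refine ⟨sq_nonneg _, Real.sqrt_pos.mpr (sub_pos.mpr hq), (Real.sqrt_le_left hb).mpr ?_⟩
    nlinarith [sq_nonneg ‖y‖, sq_nonneg (1 + ‖x‖ ^ 2)]
  · rintro ⟨hA, hS, hSb⟩
    simp only [mem_Ici] at hA
    obtain ⟨x, hx⟩ := exists_norm_eq E (Real.sqrt_nonneg A)
    obtain ⟨y, hy⟩ := exists_norm_eq F
      (div_nonneg (Real.sqrt_nonneg (b ^ 2 - S ^ 2)) (by linarith : (0 : ℝ) ≤ 1 + A))
    have hxA : ‖x‖ ^ 2 = A := by rw [hx, Real.sq_sqrt hA]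
    -- `y` is chosen so that the quantity under the square root becomes `S²`
    have hyS : ‖y‖ ^ 2 * (1 + ‖x‖ ^ 2) ^ 2 = b ^ 2 - S ^ 2 := by
      have : 0 ≤ b ^ 2 - S ^ 2 := by nlinarith
      rw [hxA, hy, div_pow, Real.sq_sqrt this]
      field_simp
    refine ⟨(x, y), ?_, ?_⟩
    · show ‖y‖ ^ 2 * (1 + ‖x‖ ^ 2) ^ 2 < b ^ 2
      nlinarith
    · show (‖x‖ ^ 2, √(b ^ 2 - ‖y‖ ^ 2 * (1 + ‖x‖ ^ 2) ^ 2)) = (A, S)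
      rw [hyS, hxA, sub_sub_cancel, Real.sqrt_sq hS.le]

/-- Phase change of the Eguchi-Hanson metric, Case 2: for `b > 0`, on the domain
`D = {(α, β) : |β|²(1+|α|²)² < b²}`, the map
`F(α,β) = (((1−|α|²)/(2(1+|α|²)))S, (|α|²/(1+|α|²))S)` with
`S = √(b² − |β|²(1+|α|²)²)` has image exactly
`{(m₁, m₂) : m₂ ≥ 0, 2m₁ + m₂ > 0, m₁ + m₂ ≤ b/2}`. -/
theorem eguchi_hanson_phase_change_inner_image
    (b : ℝ) (hb : 0 < b)
    (F : ℂ × ℂ → ℝ × ℝ)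
    (hF : ∀ α β : ℂ, F (α, β) =
      (((1 - ‖α‖ ^ 2) / (2 * (1 + ‖α‖ ^ 2))) *
          Real.sqrt (b ^ 2 - ‖β‖ ^ 2 * (1 + ‖α‖ ^ 2) ^ 2),
        (‖α‖ ^ 2 / (1 + ‖α‖ ^ 2)) *
          Real.sqrt (b ^ 2 - ‖β‖ ^ 2 * (1 + ‖α‖ ^ 2) ^ 2))) :
    F '' { q : ℂ × ℂ |
        ‖q.2‖ ^ 2 * (1 + ‖q.1‖ ^ 2) ^ 2 < b ^ 2 }
      = { m : ℝ × ℝ | 0 ≤ m.2 ∧ 0 < 2 * m.1 + m.2 ∧ m.1 + m.2 ≤ b / 2 } := by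
  have hF' : F = (fun p : ℝ × ℝ ↦ ehMomentMap p.1 p.2) ∘ ehMomentCoords b := by
    funext ⟨α, β⟩
    exact hF α β
  rw [hF', image_comp, image_ehMomentCoords hb.le, image_ehMomentMap]
end
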